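/- arXiv:2506.09466 — 5 statements merged into one kernel-verified Lean document; each statement's English description precedes it below -/
import Mathlib

section
/- For positive reals α, β, π, N, s_H, s_C^R, s_C^P with β < α, s_C^R < s_H, s_C^P < s_H, and s_C^R/s_H > (α+π-β)/(α+π), the quantity N(α(α+π-β)s_H − (α+π)(α-β)s_C^R) / ((α+π)(s_H(s_C^R + s_C^P) − s_C^R s_C^P)) is strictly positive and strictly less than βN/s_C^R. -/
theorem stmt2 (α β π N sH sCR sCP : ℝ)
    (hα : 0 < α) (hβ : 0 < β) (hπ : 0 < π) (hN : 0 < N)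
    (hsH : 0 < sH) (hsCR : 0 < sCR) (hsCP : 0 < sCP)
    (hβα : β < α) (hRH : sCR < sH) (hPH : sCP < sH)
    (hreg : sCR / sH > (α + π - β) / (α + π)) :
    0 < N * (α * (α + π - β) * sH - (α + π) * (α - β) * sCR) /
        ((α + π) * (sH * (sCR + sCP) - sCR * sCP)) ∧
    N * (α * (α + π - β) * sH - (α + π) * (α - β) * sCR) /
        ((α + π) * (sH * (sCR + sCP) - sCR * sCP)) < β * N / sCR := by
  have hαπ : 0 < α + π := by linarith
  have hreg' : (α + π - β) * sH < sCR * (α + π) := by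
    rw [gt_iff_lt, div_lt_div_iff₀ hαπ hsH] at hreg
    linarith
  have hD : 0 < (α + π) * (sH * (sCR + sCP) - sCR * sCP) := by
    have : 0 < sH * (sCR + sCP) - sCR * sCP := by nlinarith
    positivity
  have hNum : 0 < N * (α * (α + π - β) * sH - (α + π) * (α - β) * sCR) := by
    have : (α + π) * (α - β) * sCR < α * (α + π - β) * sH := by
      nlinarith [mul_pos (mul_pos hβ hπ) hsH,
        mul_pos (mul_pos hαπ (sub_pos.mpr hβα)) (sub_pos.mpr hRH)]
    nlinarith
  constructor
  · exact div_pos hNum hD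
  · rw [div_lt_div_iff₀ hD hsCR]
    nlinarith [mul_pos (mul_pos hβ hαπ) (mul_pos hsCP (sub_pos.mpr hRH)),
      mul_pos (mul_pos hβ hβ) (mul_pos hsH hsCR),
      mul_lt_mul_of_pos_left hreg' (mul_pos (sub_pos.mpr hβα) hsCR)]
end

section
/- Consider the function SC(f_R, f_P) = ∫_{t̂_0^R}^{t*} (β(t* − t) + c^R) s_C^R dt + ∫_{t̂_0^P}^{t*} (β(t* − t) + u^P) s_C^P dt, where t̂_0^R = t* − N^R/s_C^R, t̂_0^P = t* − N^P/s_C^P, N^R + N^P = N, and N^R is determined from the cost-equality constraint β(t* − t̂_0^R) + f_R + c^R = β(t* − t̂_0^P) + f_P + u^P. Then SC depends on (f_R, f_P) only through f_P − f_R, is convex in f_P − f_R, and is minimized (over admissible fee differences giving N^R, N^P ≥ 0) at f_P − f_R = 0. -/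
open intervalIntegral

/-- Number of ride-hailing users as determined by the cost-equality constraint,
as a function of the fee difference `d = f_P - f_R`. -/
noncomputable def NRfun (β uP cR N sCR sCP : ℝ) (d : ℝ) : ℝ :=
  ((uP - cR + d) * sCP + β * N) * sCR / (β * (sCR + sCP))

/-- Social cost as a function of the two initial fees. -/
noncomputable def SCfun (tstar β uP cR N sCR sCP : ℝ) (fR fP : ℝ) : ℝ :=
  (∫ t in (tstar - NRfun β uP cR N sCR sCP (fP - fR) / sCR)..tstar,
      (β * (tstar - t) + cR) * sCR) +
  (∫ t in (tstar - (N - NRfun β uP cR N sCR sCP (fP - fR)) / sCP)..tstar,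
      (β * (tstar - t) + uP) * sCP)

lemma integ (β c s tstar a : ℝ) :
    ∫ t in (tstar - a)..tstar, (β * (tstar - t) + c) * s
      = (β * a ^ 2 / 2 + c * a) * s := by
  have h : ∀ t : ℝ, (β * (tstar - t) + c) * s = (β * tstar + c) * s - (β * s) * t := by
    intro t; ring
  simp only [h]
  rw [intervalIntegral.integral_sub intervalIntegrable_const
      ((intervalIntegral.intervalIntegrable_id).const_mul _),
    intervalIntegral.integral_const, intervalIntegral.integral_const_mul, integral_id]
  simp only [smul_eq_mul]
  ring

theorem stmt5 (tstar β uP cR N sCR sCP : ℝ)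
    (hβ : 0 < β) (hc : cR < uP) (hN : 0 < N) (hsCR : 0 < sCR) (hsCP : 0 < sCP) :
    -- the constraint determining N^R: costs of the first commuters of each mode are equal
    (∀ fR fP : ℝ,
        β * (tstar - (tstar - NRfun β uP cR N sCR sCP (fP - fR) / sCR)) + fR + cR =
        β * (tstar - (tstar - (N - NRfun β uP cR N sCR sCP (fP - fR)) / sCP)) + fP + uP) ∧
    -- SC depends on (f_R, f_P) only through f_P - f_R
    (∀ fR fP fR' fP' : ℝ, fP - fR = fP' - fR' →
        SCfun tstar β uP cR N sCR sCP fR fP = SCfun tstar β uP cR N sCR sCP fR' fP') ∧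
    -- as a function of the fee difference, SC is convex
    ConvexOn ℝ Set.univ (fun d : ℝ => SCfun tstar β uP cR N sCR sCP 0 d) ∧
    -- and minimized at fee difference 0 over admissible differences
    (∀ d : ℝ, 0 ≤ NRfun β uP cR N sCR sCP d → NRfun β uP cR N sCR sCP d ≤ N →
        SCfun tstar β uP cR N sCR sCP 0 0 ≤ SCfun tstar β uP cR N sCR sCP 0 d) := by
  have hβ' : β ≠ 0 := ne_of_gt hβ
  have hR' : sCR ≠ 0 := ne_of_gt hsCR
  have hP' : sCP ≠ 0 := ne_of_gt hsCP
  have hs : sCR + sCP ≠ 0 := ne_of_gt (by linarith)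
  have hβs : β * (sCR + sCP) ≠ 0 := mul_ne_zero hβ' hs
  have hβs' : β * sCP + β * sCR ≠ 0 := by
    intro h; exact hβs (by linarith [h])
  -- closed form of the social cost as a function of the fee difference
  obtain ⟨c2, hc2, hG⟩ : ∃ c2 : ℝ, 0 ≤ c2 ∧ ∀ d : ℝ,
      SCfun tstar β uP cR N sCR sCP 0 d
        = c2 * d ^ 2 + SCfun tstar β uP cR N sCR sCP 0 0 := by
    refine ⟨(β / (2 * sCR) + β / (2 * sCP)) * (sCP * sCR / (β * (sCR + sCP))) ^ 2, ?_, ?_⟩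
    · have hb := hβ.le
      positivity
    · intro d
      simp only [SCfun, integ, NRfun]
      field_simp
      ring
  refine ⟨?_, ?_, ?_, ?_⟩
  · intro fR fP
    simp only [NRfun]
    field_simp
    ring
  · intro fR fP fR' fP' h
    simp only [SCfun, h]
  · refine ⟨convex_univ, ?_⟩
    intro x _ y _ a b ha hb hab
    simp only [smul_eq_mul]
    rw [hG (a * x + b * y), hG x, hG y]
    have h1 : a * SCfun tstar β uP cR N sCR sCP 0 0 + b * SCfun tstar β uP cR N sCR sCP 0 0
        = SCfun tstar β uP cR N sCR sCP 0 0 := by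
      rw [← add_mul, hab, one_mul]
    have hb1 : b = 1 - a := by linarith
    have key : a * (c2 * x ^ 2) + b * (c2 * y ^ 2) - c2 * (a * x + b * y) ^ 2
        = c2 * (a * b) * (x - y) ^ 2 := by rw [hb1]; ring
    nlinarith [key, mul_nonneg hc2 (mul_nonneg (mul_nonneg ha hb) (sq_nonneg (x - y)))]
  · intro d _ _
    rw [hG d]
    nlinarith [mul_nonneg hc2 (sq_nonneg d)]
end

section
/- In the late-arrival model, let SC(Δf) be defined on [0, (u^P − c^R)(s_C^R + s_C^P − s_H)/(s_H − s_C^R)] with ∂SC/∂Δf = N(s_H − s_C^R)/s_H − (Δf + u^P − c^R)·s_C^R (s_H − s_C^R)(β+γ)/(βγ s_H). Then ∂SC/∂Δf ≥ 0 whenever Δf ≤ Nβγ/(s_C^R (β+γ)) − (u^P − c^R). Consequently SC is minimized at Δf = 0 on its admissible domain when the bi-modal utilization condition u^P − c^R + Δf ≤ Nβγ/(s_C^R(β+γ)) holds throughout. -/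
theorem stmt9 (β γ N uP cR sH sCR sCP : ℝ) (SC : ℝ → ℝ)
    (hβ : 0 < β) (hγ : 0 < γ) (hN : 0 < N) (hc : cR < uP)
    (hsCR : 0 < sCR) (hRH : sCR < sH) (hsCP : 0 < sCP) (hsum : sH < sCR + sCP)
    (hderiv : ∀ x : ℝ, HasDerivAt SC
        (N * (sH - sCR) / sH -
          (x + uP - cR) * sCR * (sH - sCR) * (β + γ) / (β * γ * sH)) x) :
    (∀ x : ℝ, x ≤ N * β * γ / (sCR * (β + γ)) - (uP - cR) →
        0 ≤ N * (sH - sCR) / sH -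
          (x + uP - cR) * sCR * (sH - sCR) * (β + γ) / (β * γ * sH)) ∧
    ((∀ x ∈ Set.Icc (0 : ℝ) ((uP - cR) * (sCR + sCP - sH) / (sH - sCR)),
        uP - cR + x ≤ N * β * γ / (sCR * (β + γ))) →
      ∀ x ∈ Set.Icc (0 : ℝ) ((uP - cR) * (sCR + sCP - sH) / (sH - sCR)),
        SC 0 ≤ SC x) := by
  have hsH : 0 < sH := hsCR.trans hRH
  have hβγ : 0 < β + γ := by linarith
  have key : ∀ x : ℝ, x ≤ N * β * γ / (sCR * (β + γ)) - (uP - cR) →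
      0 ≤ N * (sH - sCR) / sH -
        (x + uP - cR) * sCR * (sH - sCR) * (β + γ) / (β * γ * sH) := by
    intro x hx
    rw [le_sub_iff_add_le, le_div_iff₀ (by positivity)] at hx
    rw [sub_nonneg, div_le_div_iff₀ (by positivity) hsH]
    have := mul_le_mul_of_nonneg_right hx
      (le_of_lt (mul_pos (sub_pos.mpr hRH) hsH))
    nlinarith [this]
  refine ⟨key, fun hbi x hx => ?_⟩
  have hmono : MonotoneOn SC (Set.Icc (0 : ℝ) ((uP - cR) * (sCR + sCP - sH) / (sH - sCR))) := by
    apply monotoneOn_of_deriv_nonneg (convex_Icc _ _)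
    · exact fun y hy => ((hderiv y).continuousAt).continuousWithinAt
    · exact fun y hy => ((hderiv y).differentiableAt).differentiableWithinAt
    · intro y hy
      rw [interior_Icc] at hy
      rw [(hderiv y).deriv]
      exact key y (by linarith [hbi y ⟨le_of_lt hy.1, le_of_lt hy.2⟩])
  have h0 : (0 : ℝ) ∈ Set.Icc (0 : ℝ) ((uP - cR) * (sCR + sCP - sH) / (sH - sCR)) :=
    ⟨le_refl 0, hx.1.trans hx.2⟩
  exact hmono h0 hx hx.1
end

section
/- Given 0 < β < α, u^P > c^R, N > 0, s_C^R, s_C^P > 0, define N^R = (Nβ + (u^P − c^R)s_C^P)·s_C^R/(β(s_C^R + s_C^P)), t_0^R = t* − N^R/s_C^R, t_1^R = t* − (β/(α+π))·N^R/s_C^R, t_0^P = t* − (N − N^R)/s_C^P, t_1^P = t* − (β/α)·(N − N^R)/s_C^P. Then these values satisfy the equilibrium system: β(t* − t_0^R) = (α+π)(t* − t_1^R); β(t* − t_0^P) = α(t* − t_1^P); β(t* − t_0^R) + c^R = β(t* − t_0^P) + u^P; (t* − t_0^R)s_C^R = N^R; and (t* − t_0^P)s_C^P = N − N^R. -/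
theorem stmt11 (α β π N uP cR sCR sCP tstar : ℝ)
    (hβ : 0 < β) (hβα : β < α) (hπ : 0 ≤ π) (hc : cR < uP)
    (hN : 0 < N) (hsCR : 0 < sCR) (hsCP : 0 < sCP)
    (NR t0R t1R t0P t1P : ℝ)
    (hNR : NR = (N * β + (uP - cR) * sCP) * sCR / (β * (sCR + sCP)))
    (ht0R : t0R = tstar - NR / sCR)
    (ht1R : t1R = tstar - (β / (α + π)) * (NR / sCR))
    (ht0P : t0P = tstar - (N - NR) / sCP)
    (ht1P : t1P = tstar - (β / α) * ((N - NR) / sCP)) :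
    β * (tstar - t0R) = (α + π) * (tstar - t1R) ∧
    β * (tstar - t0P) = α * (tstar - t1P) ∧
    β * (tstar - t0R) + cR = β * (tstar - t0P) + uP ∧
    (tstar - t0R) * sCR = NR ∧
    (tstar - t0P) * sCP = N - NR := by
  have hα0 : (0:ℝ) < α := hβ.trans hβα
  have hαπ : α + π ≠ 0 := by positivity
  have hα : α ≠ 0 := ne_of_gt hα0
  have hβ' : β ≠ 0 := ne_of_gt hβ
  have hR : sCR ≠ 0 := ne_of_gt hsCR
  have hP : sCP ≠ 0 := ne_of_gt hsCP
  have hRP : sCR + sCP ≠ 0 := by positivity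
  subst hNR ht0R ht1R ht0P ht1P
  refine ⟨?_, ?_, ?_, ?_, ?_⟩ <;> field_simp <;> ring
end

section
/- With N^R as in Scenario 2 (N^R = (Nβ + (u^P − c^R)s_C^P)·s_C^R/(β(s_C^R + s_C^P))), the non-overlap condition t_0^P ≥ t_1^R, i.e., t* − (N − N^R)/s_C^P ≥ t* − (β/(α+π))·N^R/s_C^R, holds if and only if u^P − c^R ≥ Nβ(α+π−β)/(β s_C^P + (α+π)s_C^R). -/
/-!
Clearing the positive denominators turns the non-overlap condition into
`(α + π) s_C^R N ≤ (β s_C^P + (α + π) s_C^R) N^R`. Substituting `N^R`, the terms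
`N β (α + π) s_C^R` cancel and a common factor `s_C^P` drops out, which leaves
`N β (α + π - β) ≤ (u^P - c^R) (β s_C^P + (α + π) s_C^R)`.
-/

/-- The Scenario-2 number `N^R` of ride-hailing commuters, with `u = u^P - c^R`. -/
noncomputable def rideHailingDemand (N β u sCR sCP : ℝ) : ℝ :=
  (N * β + u * sCP) * sCR / (β * (sCR + sCP))

lemma sub_div_le_mul_div_iff {a β N NR sCR sCP : ℝ} (ha : 0 < a) (hsCR : 0 < sCR)
    (hsCP : 0 < sCP) :
    (N - NR) / sCP ≤ β / a * (NR / sCR) ↔ a * sCR * N ≤ (β * sCP + a * sCR) * NR := by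
  rw [div_mul_div_comm, div_le_div_iff₀ hsCP (by positivity)]
  constructor <;> intro h <;> linarith

lemma le_mul_rideHailingDemand_iff {a β N u sCR sCP : ℝ} (hβ : 0 < β) (hsCR : 0 < sCR)
    (hsCP : 0 < sCP) :
    a * sCR * N ≤ (β * sCP + a * sCR) * rideHailingDemand N β u sCR sCP ↔
      N * β * (a - β) ≤ u * (β * sCP + a * sCR) := by
  rw [rideHailingDemand, mul_div_assoc', le_div_iff₀ (by positivity), ← sub_nonneg]
  have key : (β * sCP + a * sCR) * ((N * β + u * sCP) * sCR) - a * sCR * N * (β * (sCR + sCP))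
      = sCR * sCP * (u * (β * sCP + a * sCR) - N * β * (a - β)) := by ring
  rw [key, mul_nonneg_iff_of_pos_left (by positivity), sub_nonneg]

theorem stmt12_general (α β π N uP cR sCR sCP tstar : ℝ)
    (hβ : 0 < β) (hβαπ : β < α + π)
    (hsCR : 0 < sCR) (hsCP : 0 < sCP)
    (NR : ℝ)
    (hNR : NR = (N * β + (uP - cR) * sCP) * sCR / (β * (sCR + sCP))) :
    (tstar - (N - NR) / sCP ≥ tstar - (β / (α + π)) * (NR / sCR)) ↔
      uP - cR ≥ N * β * (α + π - β) / (β * sCP + (α + π) * sCR) := by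
  have hαπ : 0 < α + π := hβ.trans hβαπ
  rw [ge_iff_le, ge_iff_le, sub_le_sub_iff_left, sub_div_le_mul_div_iff hαπ hsCR hsCP, hNR,
    ← rideHailingDemand, le_mul_rideHailingDemand_iff hβ hsCR hsCP, div_le_iff₀ (by positivity),
    mul_comm (uP - cR)]

theorem stmt12 (α β π N uP cR sCR sCP tstar : ℝ)
    (hβ : 0 < β) (hβα : β < α) (hπ : 0 ≤ π) (hβαπ : β < α + π) (hc : cR < uP)
    (hN : 0 < N) (hsCR : 0 < sCR) (hsCP : 0 < sCP)
    (NR : ℝ)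
    (hNR : NR = (N * β + (uP - cR) * sCP) * sCR / (β * (sCR + sCP))) :
    (tstar - (N - NR) / sCP ≥ tstar - (β / (α + π)) * (NR / sCR)) ↔
      uP - cR ≥ N * β * (α + π - β) / (β * sCP + (α + π) * sCR) :=
  stmt12_general α β π N uP cR sCR sCP tstar hβ hβαπ hsCR hsCP NR hNR
end
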